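/- Let 𝔤 be a finite-dimensional real 2-step nilpotent Lie algebra, let V ⊆ 𝔤 be a subspace with 𝔤 = V ⊕ [𝔤,𝔤] (internal direct sum of vector spaces), let ρ be an inner product on V, let |·| be a norm on [𝔤,𝔤], and set m := dim [𝔤,𝔤]. Then there exists K > 0 such that for every ζ ∈ [𝔤,𝔤] there exist x₁,…,x_m ∈ V, y₁,…,y_m ∈ V and α₁,…,α_m ≥ 0 with: (i) ρ(x_k,x_k) = ρ(y_k,y_k) = 1 for every 1 ≤ k ≤ m; (ii) ρ(x_k,y_k) = 0 for every 1 ≤ k ≤ m; (iii) ζ = Σ_{k=1}^m α_k ⁅x_k,y_k⁆; (iv) Σ_{k=1}^m α_k ≤ K|ζ|. -/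

import Mathlib

/-!
Pick a basis `ζ₁, …, ζ_m` of `[𝔤,𝔤]` consisting of brackets `⁅p, q⁆` of `ρ`-orthonormal pairs of
`V`; such brackets span `[𝔤,𝔤]` because, `[𝔤,𝔤]` being central, every bracket is a bracket of
two elements of `V`, which Gram–Schmidt turns into a multiple of an orthonormal bracket. Writing
`ζ = ∑ c_k ζ_k`, swapping `p` and `q` where `c_k < 0` gives the representation with `α_k = |c_k|`.
Finally `ζ ↦ ∑ |c_k|` is bounded by a multiple of `|ζ|`, since the coordinate functionals `c_k`
are continuous for the norm `|·|`, as is every linear functional on a finite-dimensional space.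
-/

open Module Submodule

theorem Seminorm.exists_sum_norm_le_mul_of_finiteDimensional {𝕜 E F ι : Type*}
    [NontriviallyNormedField 𝕜] [CompleteSpace 𝕜] [AddCommGroup E] [Module 𝕜 E]
    [FiniteDimensional 𝕜 E] [NormedAddCommGroup F] [NormedSpace 𝕜 F] [Fintype ι]
    (p : Seminorm 𝕜 E) (hp : ∀ x, p x = 0 → x = 0) (f : ι → E →ₗ[𝕜] F) :
    ∃ K > 0, ∀ x, ∑ i, ‖f i x‖ ≤ K * p x := by
  let pNorm : AddGroupNorm E := { p.toAddGroupSeminorm with eq_zero_of_map_eq_zero' := hp }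
  let : NormedAddCommGroup E := pNorm.toNormedAddCommGroup
  let : NormedSpace 𝕜 E := ⟨fun c x => (map_smul_eq_mul p c x).le⟩
  let g i := LinearMap.toContinuousLinearMap (f i)
  refine ⟨∑ i, ‖g i‖ + 1, by positivity, fun x => ?_⟩
  calc ∑ i, ‖f i x‖ ≤ ∑ i, ‖g i‖ * p x := Finset.sum_le_sum fun i _ => (g i).le_opNorm x
    _ = (∑ i, ‖g i‖) * p x := Finset.sum_mul _ _ _ |>.symm
    _ ≤ (∑ i, ‖g i‖ + 1) * p x := by nlinarith [apply_nonneg p x]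

theorem Submodule.exists_basis_mem_of_span_eq {K M : Type*} [DivisionRing K] [AddCommGroup M]
    [Module K M] {s : Set M} {W : Submodule K M} [Module.Finite K W] (h : span K s = W) :
    ∃ b : Basis (Fin (finrank K W)) K W, ∀ i, (b i : M) ∈ s := by
  subst h
  obtain ⟨f, hfs, hspan, hli⟩ := exists_fun_fin_finrank_span_eq K s
  exact ⟨(Basis.span hli).map (LinearEquiv.ofEq _ _ hspan), fun i => by
    simpa [Basis.span_apply] using hfs i⟩

section TwoStep

variable {L : Type*} [AddCommGroup L] [Module ℝ L] (bracket : L →ₗ[ℝ] L →ₗ[ℝ] L)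
  (ρ : L →ₗ[ℝ] L →ₗ[ℝ] ℝ) (V : Submodule ℝ L)

def orthonormalBrackets : Set L :=
  {z | ∃ p ∈ V, ∃ q ∈ V, ρ p p = 1 ∧ ρ q q = 1 ∧ ρ p q = 0 ∧ bracket p q = z}

variable {bracket ρ V}

theorem bracket_eq_zero_of_mem_span_brackets
    (h2step : ∀ x y z : L, bracket (bracket x y) z = 0) {d : L}
    (hd : d ∈ span ℝ {z : L | ∃ x y : L, z = bracket x y}) : bracket d = 0 := by
  induction hd using span_induction with
  | mem z hz => obtain ⟨x, y, rfl⟩ := hz; ext w; exact h2step x y w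
  | zero => simp
  | add a b _ _ ha hb => rw [map_add, ha, hb, add_zero]
  | smul c a _ ha => rw [map_smul, ha, smul_zero]

theorem bracket_mem_span_orthonormalBrackets_of_orthogonal (hpos : ∀ x ∈ V, x ≠ 0 → 0 < ρ x x)
    {v w : L} (hv : v ∈ V) (hw : w ∈ V) (hv0 : v ≠ 0) (hw0 : w ≠ 0) (hvw : ρ v w = 0) :
    bracket v w ∈ span ℝ (orthonormalBrackets bracket ρ V) := by
  obtain ⟨a, ha, hva⟩ : ∃ a > 0, ρ v v = a ^ 2 :=
    ⟨√(ρ v v), Real.sqrt_pos.2 (hpos v hv hv0), (Real.sq_sqrt (hpos v hv hv0).le).symm⟩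
  obtain ⟨b, hb, hwb⟩ : ∃ b > 0, ρ w w = b ^ 2 :=
    ⟨√(ρ w w), Real.sqrt_pos.2 (hpos w hw hw0), (Real.sq_sqrt (hpos w hw hw0).le).symm⟩
  have hunit : bracket (a⁻¹ • v) (b⁻¹ • w) ∈ orthonormalBrackets bracket ρ V := by
    refine ⟨_, V.smul_mem _ hv, _, V.smul_mem _ hw, ?_, ?_, ?_, rfl⟩ <;>
      simp only [map_smul, LinearMap.smul_apply, smul_eq_mul, hva, hwb, hvw, mul_zero] <;>
      field_simp
  have hscale : bracket v w = (a * b) • bracket (a⁻¹ • v) (b⁻¹ • w) := by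
    simp only [map_smul, LinearMap.smul_apply, smul_smul]
    match_scalars
    field_simp
  rw [hscale]
  exact smul_mem _ _ (subset_span hunit)

theorem bracket_mem_span_orthonormalBrackets (halt : ∀ x : L, bracket x x = 0)
    (hpos : ∀ x ∈ V, x ≠ 0 → 0 < ρ x x) {v w : L} (hv : v ∈ V) (hw : w ∈ V) :
    bracket v w ∈ span ℝ (orthonormalBrackets bracket ρ V) := by
  by_cases hvw : bracket v w = 0
  · rw [hvw]; exact zero_mem _
  have hv0 : v ≠ 0 := by rintro rfl; simp at hvw
  set w' := w - (ρ v w / ρ v v) • v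
  have hbracket : bracket v w' = bracket v w := by simp [w', halt]
  have hw'0 : w' ≠ 0 := by
    intro h0
    rw [h0, map_zero] at hbracket
    exact hvw hbracket.symm
  have horth : ρ v w' = 0 := by
    simp [w', div_mul_cancel₀ _ (hpos v hv hv0).ne']
  rw [← hbracket]
  exact bracket_mem_span_orthonormalBrackets_of_orthogonal hpos hv
    (V.sub_mem hw (V.smul_mem _ hv)) hv0 hw'0 horth

theorem span_orthonormalBrackets_eq (halt : ∀ x : L, bracket x x = 0)
    (h2step : ∀ x y z : L, bracket (bracket x y) z = 0)
    {D : Submodule ℝ L} (hD : D = span ℝ {z : L | ∃ x y : L, z = bracket x y})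
    (hVD : Codisjoint V D) (hpos : ∀ x ∈ V, x ≠ 0 → 0 < ρ x x) :
    span ℝ (orthonormalBrackets bracket ρ V) = D := by
  refine le_antisymm (span_le.2 ?_) ?_
  · rintro _ ⟨p, -, q, -, -, -, -, rfl⟩
    exact hD ▸ subset_span ⟨p, q, rfl⟩
  rw [hD, span_le]
  rintro _ ⟨x, y, rfl⟩
  obtain ⟨v, hv, d, hd, rfl⟩ := mem_sup.1 (hVD.eq_top ▸ mem_top : x ∈ V ⊔ D)
  obtain ⟨w, hw, e, he, rfl⟩ := mem_sup.1 (hVD.eq_top ▸ mem_top : y ∈ V ⊔ D)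
  rw [hD] at hd he
  have hd0 := bracket_eq_zero_of_mem_span_brackets h2step hd
  have he0 (z : L) : bracket z e = 0 := by
    rw [← LinearMap.IsAlt.neg halt, bracket_eq_zero_of_mem_span_brackets h2step he,
      LinearMap.zero_apply, neg_zero]
  have hde : bracket (v + d) (w + e) = bracket v w := by
    simp only [map_add, hd0, he0, add_zero]
  rw [SetLike.mem_coe, hde]
  exact bracket_mem_span_orthonormalBrackets halt hpos hv hw

theorem neg_mem_orthonormalBrackets (halt : ∀ x : L, bracket x x = 0)
    (hsym : ∀ x ∈ V, ∀ y ∈ V, ρ x y = ρ y x) {z : L} (hz : z ∈ orthonormalBrackets bracket ρ V) :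
    -z ∈ orthonormalBrackets bracket ρ V := by
  obtain ⟨p, hp, q, hq, hpp, hqq, hpq, rfl⟩ := hz
  exact ⟨q, hq, p, hp, hqq, hpp, hsym q hq p hp ▸ hpq, (LinearMap.IsAlt.neg halt p q).symm⟩

end TwoStep

theorem stmt_2 {L : Type*} [NormedAddCommGroup L] [NormedSpace ℝ L] [FiniteDimensional ℝ L]
    (bracket : L →ₗ[ℝ] L →ₗ[ℝ] L)
    (halt : ∀ x : L, bracket x x = 0)
    (h2step : ∀ x y z : L, bracket (bracket x y) z = 0)
    -- the derived subalgebra `[𝔤,𝔤]`, the span of all brackets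
    (D : Submodule ℝ L) (hD : D = Submodule.span ℝ {z : L | ∃ x y : L, z = bracket x y})
    -- `𝔤 = V ⊕ [𝔤,𝔤]` as an internal direct sum of vector spaces
    (V : Submodule ℝ L) (hVD : IsCompl V D)
    -- `ρ` is an inner product on `V`
    (ρ : L →ₗ[ℝ] L →ₗ[ℝ] ℝ)
    (hsym : ∀ x ∈ V, ∀ y ∈ V, ρ x y = ρ y x)
    (hpos : ∀ x ∈ V, x ≠ 0 → 0 < ρ x x)
    -- `nrm` is a norm on `[𝔤,𝔤]`
    (nrm : L → ℝ)
    (hn2 : ∀ z ∈ D, nrm z = 0 → z = 0)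
    (hn3 : ∀ (c : ℝ), ∀ z ∈ D, nrm (c • z) = |c| * nrm z)
    (hn4 : ∀ z ∈ D, ∀ w ∈ D, nrm (z + w) ≤ nrm z + nrm w) :
    ∃ K > (0:ℝ), ∀ ζ ∈ D,
      ∃ x y : Fin (Module.finrank ℝ D) → L, ∃ α : Fin (Module.finrank ℝ D) → ℝ,
        (∀ k, x k ∈ V) ∧ (∀ k, y k ∈ V) ∧ (∀ k, 0 ≤ α k) ∧
        (∀ k, ρ (x k) (x k) = 1) ∧ (∀ k, ρ (y k) (y k) = 1) ∧
        (∀ k, ρ (x k) (y k) = 0) ∧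
        ζ = ∑ k, α k • bracket (x k) (y k) ∧
        (∑ k, α k) ≤ K * nrm ζ := by
  obtain ⟨B, hB⟩ := exists_basis_mem_of_span_eq
    (span_orthonormalBrackets_eq halt h2step hD hVD.codisjoint hpos)
  let N : Seminorm ℝ D := Seminorm.of (fun z => nrm z) (fun z w => hn4 z z.2 w w.2)
    (fun c z => by rw [Real.norm_eq_abs]; exact hn3 c z z.2)
  obtain ⟨K, hK, hbound⟩ := N.exists_sum_norm_le_mul_of_finiteDimensional
    (fun z hz => Subtype.ext (hn2 z z.2 hz)) B.coord
  refine ⟨K, hK, fun ζ hζ => ?_⟩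
  set c := B.repr ⟨ζ, hζ⟩
  have hsign (k) : ∃ z ∈ orthonormalBrackets bracket ρ V, c k • (B k : L) = |c k| • z := by
    rcases le_or_gt 0 (c k) with h | h
    · exact ⟨B k, hB k, by rw [abs_of_nonneg h]⟩
    · exact ⟨-B k, neg_mem_orthonormalBrackets halt hsym (hB k), by rw [abs_of_neg h, neg_smul_neg]⟩
  choose z hz hcz using hsign
  choose x hx y hy hxx hyy hxy hxyz using hz
  refine ⟨x, y, fun k => |c k|, hx, hy, fun k => abs_nonneg _, hxx, hyy, hxy, ?_, ?_⟩
  · have hsum := congr_arg Subtype.val (B.sum_repr ⟨ζ, hζ⟩)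
    rw [coe_sum] at hsum
    calc ζ = ∑ k, c k • (B k : L) := hsum.symm
      _ = _ := Finset.sum_congr rfl fun k _ => by rw [hcz, hxyz]
  · exact hbound ⟨ζ, hζ⟩
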